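/- On ℂ² ∖ {0} with the standard flat Kähler metric, the (0,1)-form ξ = (z̄₂ dz̄₁ − z̄₁ dz̄₂)/(|z₁|² + |z₂|²)² satisfies ∂̄ξ = 0 and ∂̄*ξ = 0, but ξ is not of the form ∂̄ψ for any smooth function ψ on ℂ² ∖ {0} decaying to zero at infinity. -/

import Mathlib

open Complex Filter

/- Wirtinger derivative ∂f/∂z̄₁ of f : ℂ² → ℂ (real-differentiable). -/
noncomputable def dbar1 (f : ℂ × ℂ → ℂ) (z : ℂ × ℂ) : ℂ :=
  (1 / 2) * (fderiv ℝ f z (1, 0) + Complex.I * fderiv ℝ f z (Complex.I, 0))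

/- Wirtinger derivative ∂f/∂z̄₂. -/
noncomputable def dbar2 (f : ℂ × ℂ → ℂ) (z : ℂ × ℂ) : ℂ :=
  (1 / 2) * (fderiv ℝ f z (0, 1) + Complex.I * fderiv ℝ f z (0, Complex.I))

/- Wirtinger derivative ∂f/∂z₁. -/
noncomputable def dz1 (f : ℂ × ℂ → ℂ) (z : ℂ × ℂ) : ℂ :=
  (1 / 2) * (fderiv ℝ f z (1, 0) - Complex.I * fderiv ℝ f z (Complex.I, 0))

/- Wirtinger derivative ∂f/∂z₂. -/
noncomputable def dz2 (f : ℂ × ℂ → ℂ) (z : ℂ × ℂ) : ℂ :=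
  (1 / 2) * (fderiv ℝ f z (0, 1) - Complex.I * fderiv ℝ f z (0, Complex.I))

/- First component of ξ = (z̄₂ dz̄₁ − z̄₁ dz̄₂)/(|z₁|²+|z₂|²)². -/
noncomputable def xi1 (z : ℂ × ℂ) : ℂ :=
  (starRingEnd ℂ) z.2 / ((Complex.normSq z.1 + Complex.normSq z.2 : ℝ) : ℂ) ^ 2

/- Second component of ξ. -/
noncomputable def xi2 (z : ℂ × ℂ) : ℂ :=
  -(starRingEnd ℂ) z.1 / ((Complex.normSq z.1 + Complex.normSq z.2 : ℝ) : ℂ) ^ 2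

/- STATEMENT 10: on ℂ² ∖ {0} with the flat metric, ξ = (z̄₂ dz̄₁ − z̄₁ dz̄₂)/(|z₁|²+|z₂|²)²
satisfies ∂̄ξ = 0 (i.e. ∂xi₂/∂z̄₁ = ∂xi₁/∂z̄₂) and ∂̄*ξ = 0 (i.e. ∂xi₁/∂z₁ + ∂xi₂/∂z₂ = 0),
but there is no smooth ψ on ℂ² ∖ {0}, decaying to zero at infinity, with ξ = ∂̄ψ. -/

lemma rho_ne (z : ℂ × ℂ) (hz : z ≠ 0) :
    (z.1 * (starRingEnd ℂ) z.1 + z.2 * (starRingEnd ℂ) z.2) ≠ 0 := by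
  have hρR : (0:ℝ) < Complex.normSq z.1 + Complex.normSq z.2 := by
    rcases eq_or_ne z.1 0 with h1 | h1
    · exact add_pos_of_nonneg_of_pos (Complex.normSq_nonneg _)
        (Complex.normSq_pos.2 fun h2 => hz (Prod.ext h1 h2))
    · exact add_pos_of_pos_of_nonneg (Complex.normSq_pos.2 h1) (Complex.normSq_nonneg _)
  rw [Complex.mul_conj, Complex.mul_conj]; exact_mod_cast hρR.ne'

lemma fderiv_xi1 (z : ℂ × ℂ) (hz : z ≠ 0) (v : ℂ × ℂ) :
    fderiv ℝ xi1 z v =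
      (starRingEnd ℂ) v.2 / (z.1 * (starRingEnd ℂ) z.1 + z.2 * (starRingEnd ℂ) z.2) ^ 2
      - (starRingEnd ℂ) z.2 * (2 * (v.1 * (starRingEnd ℂ) z.1 + z.1 * (starRingEnd ℂ) v.1
          + v.2 * (starRingEnd ℂ) z.2 + z.2 * (starRingEnd ℂ) v.2))
        / (z.1 * (starRingEnd ℂ) z.1 + z.2 * (starRingEnd ℂ) z.2) ^ 3 := by
  have hρ0 := rho_ne z hz
  have hxeq : xi1 = fun z : ℂ × ℂ => (starRingEnd ℂ) z.2 *
      ((z.1 * (starRingEnd ℂ) z.1 + z.2 * (starRingEnd ℂ) z.2) *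
       (z.1 * (starRingEnd ℂ) z.1 + z.2 * (starRingEnd ℂ) z.2))⁻¹ := by
    funext w
    rw [xi1, Complex.mul_conj, Complex.mul_conj, div_eq_mul_inv, sq]
    norm_cast
  have h1 : HasFDerivAt (fun z : ℂ × ℂ => z.1) (ContinuousLinearMap.fst ℝ ℂ ℂ) z := hasFDerivAt_fst
  have h2 : HasFDerivAt (fun z : ℂ × ℂ => z.2) (ContinuousLinearMap.snd ℝ ℂ ℂ) z := hasFDerivAt_snd
  have hc1 : HasFDerivAt (fun z : ℂ × ℂ => (starRingEnd ℂ) z.1)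
      ((conjCLE : ℂ →L[ℝ] ℂ).comp (ContinuousLinearMap.fst ℝ ℂ ℂ)) z :=
    conjCLE.hasFDerivAt.comp z h1
  have hc2 : HasFDerivAt (fun z : ℂ × ℂ => (starRingEnd ℂ) z.2)
      ((conjCLE : ℂ →L[ℝ] ℂ).comp (ContinuousLinearMap.snd ℝ ℂ ℂ)) z :=
    conjCLE.hasFDerivAt.comp z h2
  have hρ := (h1.mul hc1).add (h2.mul hc2)
  have hinv := (hasFDerivAt_inv' (𝕜 := ℝ) (mul_ne_zero hρ0 hρ0)).comp z (hρ.mul hρ)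
  have hx := hc2.mul hinv
  simp only [Function.comp_def] at hx
  replace hx := hx.congr_of_eventuallyEq (f₁ := xi1) (Filter.EventuallyEq.of_eq hxeq)
  rw [hx.fderiv]
  simp only [ContinuousLinearMap.add_apply, ContinuousLinearMap.smul_apply,
    ContinuousLinearMap.comp_apply, ContinuousLinearMap.neg_apply,
    ContinuousLinearMap.mulLeftRight_apply, ContinuousLinearMap.coe_fst',
    ContinuousLinearMap.coe_snd', conjCLE_apply, smul_eq_mul, Complex.conjCLE_apply,
    Pi.mul_apply, Pi.add_apply, Pi.neg_apply, ContinuousLinearEquiv.coe_coe]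
  field_simp
  ring

lemma fderiv_xi2 (z : ℂ × ℂ) (hz : z ≠ 0) (v : ℂ × ℂ) :
    fderiv ℝ xi2 z v =
      -(starRingEnd ℂ) v.1 / (z.1 * (starRingEnd ℂ) z.1 + z.2 * (starRingEnd ℂ) z.2) ^ 2
      + (starRingEnd ℂ) z.1 * (2 * (v.1 * (starRingEnd ℂ) z.1 + z.1 * (starRingEnd ℂ) v.1
          + v.2 * (starRingEnd ℂ) z.2 + z.2 * (starRingEnd ℂ) v.2))
        / (z.1 * (starRingEnd ℂ) z.1 + z.2 * (starRingEnd ℂ) z.2) ^ 3 := by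
  have hρ0 := rho_ne z hz
  have hxeq : xi2 = fun z : ℂ × ℂ => (-(starRingEnd ℂ) z.1) *
      ((z.1 * (starRingEnd ℂ) z.1 + z.2 * (starRingEnd ℂ) z.2) *
       (z.1 * (starRingEnd ℂ) z.1 + z.2 * (starRingEnd ℂ) z.2))⁻¹ := by
    funext w
    rw [xi2, Complex.mul_conj, Complex.mul_conj, div_eq_mul_inv, sq]
    norm_cast
  have h1 : HasFDerivAt (fun z : ℂ × ℂ => z.1) (ContinuousLinearMap.fst ℝ ℂ ℂ) z := hasFDerivAt_fst
  have h2 : HasFDerivAt (fun z : ℂ × ℂ => z.2) (ContinuousLinearMap.snd ℝ ℂ ℂ) z := hasFDerivAt_snd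
  have hc1 : HasFDerivAt (fun z : ℂ × ℂ => (starRingEnd ℂ) z.1)
      ((conjCLE : ℂ →L[ℝ] ℂ).comp (ContinuousLinearMap.fst ℝ ℂ ℂ)) z :=
    conjCLE.hasFDerivAt.comp z h1
  have hc2 : HasFDerivAt (fun z : ℂ × ℂ => (starRingEnd ℂ) z.2)
      ((conjCLE : ℂ →L[ℝ] ℂ).comp (ContinuousLinearMap.snd ℝ ℂ ℂ)) z :=
    conjCLE.hasFDerivAt.comp z h2
  have hρ := (h1.mul hc1).add (h2.mul hc2)
  have hinv := (hasFDerivAt_inv' (𝕜 := ℝ) (mul_ne_zero hρ0 hρ0)).comp z (hρ.mul hρ)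
  have hx := hc1.neg.mul hinv
  simp only [Function.comp_def] at hx
  replace hx := hx.congr_of_eventuallyEq (f₁ := xi2) (Filter.EventuallyEq.of_eq hxeq)
  rw [hx.fderiv]
  simp only [ContinuousLinearMap.add_apply, ContinuousLinearMap.smul_apply,
    ContinuousLinearMap.comp_apply, ContinuousLinearMap.neg_apply,
    ContinuousLinearMap.mulLeftRight_apply, ContinuousLinearMap.coe_fst',
    ContinuousLinearMap.coe_snd', conjCLE_apply, smul_eq_mul, Complex.conjCLE_apply,
    Pi.mul_apply, Pi.add_apply, Pi.neg_apply, ContinuousLinearEquiv.coe_coe]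
  field_simp
  ring

lemma part1 (z : ℂ × ℂ) (hz : z ≠ 0) : dbar1 xi2 z = dbar2 xi1 z := by
  have hρ0 := rho_ne z hz
  rw [dbar1, dbar2, fderiv_xi2 z hz, fderiv_xi2 z hz, fderiv_xi1 z hz, fderiv_xi1 z hz]
  simp only [map_one, map_zero, Complex.conj_I]
  field_simp
  ring_nf
  rw [Complex.I_sq]
  ring

lemma part2 (z : ℂ × ℂ) (hz : z ≠ 0) : dz1 xi1 z + dz2 xi2 z = 0 := by
  have hρ0 := rho_ne z hz
  rw [dz1, dz2, fderiv_xi1 z hz, fderiv_xi1 z hz, fderiv_xi2 z hz, fderiv_xi2 z hz]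
  simp only [map_one, map_zero, Complex.conj_I]
  field_simp
  ring_nf
  rw [Complex.I_sq]
  ring

lemma CR_diff {f : ℂ → ℂ} {L : ℂ →L[ℝ] ℂ} {x : ℂ} (h : HasFDerivAt f L x)
    (hL : L Complex.I = Complex.I * L 1) : DifferentiableAt ℂ f x := by
  refine ⟨(L 1) • (ContinuousLinearMap.id ℂ ℂ), hasFDerivAt_of_restrictScalars ℝ h ?_⟩
  ext v
  simp only [ContinuousLinearMap.coe_restrictScalars', ContinuousLinearMap.smul_apply,
    ContinuousLinearMap.coe_id', id_eq, smul_eq_mul]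
  have hv : v = (v.re : ℝ) • (1:ℂ) + (v.im : ℝ) • Complex.I := by
    simp [Complex.real_smul, Complex.re_add_im]
  rw [hv, map_add, map_smul, map_smul, hL]
  simp only [smul_eq_mul, Complex.real_smul]
  ring

noncomputable def phi1 (c w : ℂ) : ℂ :=
  -((starRingEnd ℂ) w) * (c * (c * (starRingEnd ℂ) c + w * (starRingEnd ℂ) w))⁻¹
noncomputable def phi2 (u d : ℂ) : ℂ :=
  ((starRingEnd ℂ) u) * (d * (u * (starRingEnd ℂ) u + d * (starRingEnd ℂ) d))⁻¹

lemma slice1_diff (c : ℂ) (hc : c ≠ 0) {ψ : ℂ × ℂ → ℂ}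
    (hψ : ∀ z : ℂ × ℂ, z ≠ 0 → DifferentiableAt ℝ ψ z)
    (hdb : ∀ z : ℂ × ℂ, z ≠ 0 → dbar2 ψ z = xi2 z) :
    Differentiable ℂ (fun w => ψ (c, w) - phi1 c w) := by
  intro w
  have hzne : ((c, w) : ℂ × ℂ) ≠ 0 := fun h => hc (congrArg Prod.fst h)
  have hρ0 : (c * (starRingEnd ℂ) c + w * (starRingEnd ℂ) w) ≠ 0 := rho_ne (c, w) hzne
  have hden : c * (c * (starRingEnd ℂ) c + w * (starRingEnd ℂ) w) ≠ 0 := mul_ne_zero hc hρ0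
  have hD := (hψ _ hzne).hasFDerivAt
  have pair : HasFDerivAt (fun w : ℂ => ((c, w) : ℂ × ℂ))
      ((0 : ℂ →L[ℝ] ℂ).prod (ContinuousLinearMap.id ℝ ℂ)) w :=
    HasFDerivAt.prodMk (hasFDerivAt_const c w) (hasFDerivAt_id w)
  have hs := hD.comp w pair
  simp only [Function.comp_def] at hs
  have hconj : HasFDerivAt (fun u : ℂ => (starRingEnd ℂ) u) (conjCLE : ℂ →L[ℝ] ℂ) w :=
    conjCLE.hasFDerivAt
  have hρw := (hasFDerivAt_const (c * (starRingEnd ℂ) c) w).add ((hasFDerivAt_id w).mul hconj)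
  have hdenD := hρw.const_mul c
  have hinv := (hasFDerivAt_inv' (𝕜 := ℝ) hden).comp w hdenD
  have hφ := hconj.neg.mul hinv
  simp only [Function.comp_def] at hφ
  have hg := hs.sub hφ
  simp only [phi1]
  refine CR_diff hg ?_
  have h2 := hdb (c, w) hzne
  rw [dbar2] at h2
  have hxi : xi2 (c, w) = -(starRingEnd ℂ) c / (c * (starRingEnd ℂ) c + w * (starRingEnd ℂ) w) ^ 2 := by
    rw [xi2, Complex.mul_conj, Complex.mul_conj, sq, sq]
    norm_cast
  rw [hxi] at h2
  set D1 := fderiv ℝ ψ (c, w) (0, 1) with hD1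
  set DI := fderiv ℝ ψ (c, w) (0, Complex.I) with hDId
  simp only [ContinuousLinearMap.sub_apply, ContinuousLinearMap.comp_apply,
    ContinuousLinearMap.prod_apply, ContinuousLinearMap.zero_apply,
    ContinuousLinearMap.coe_id', id_eq, ContinuousLinearMap.add_apply,
    ContinuousLinearMap.smul_apply, ContinuousLinearMap.neg_apply,
    ContinuousLinearMap.mulLeftRight_apply, conjCLE_apply, smul_eq_mul, map_one, Complex.conj_I,
    Pi.mul_apply, Pi.add_apply, Pi.neg_apply, ContinuousLinearEquiv.coe_coe, id_eq,
    ← hD1, ← hDId]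
  have h2' : Complex.I * DI = 2 * (-(starRingEnd ℂ) c /
      (c * (starRingEnd ℂ) c + w * (starRingEnd ℂ) w) ^ 2) - D1 := by
    linear_combination 2 * h2
  have hDI : DI = -Complex.I * (2 * (-(starRingEnd ℂ) c /
      (c * (starRingEnd ℂ) c + w * (starRingEnd ℂ) w) ^ 2) - D1) := by
    rw [← h2', ← mul_assoc]
    norm_num [Complex.I_mul_I]
  rw [hDI]
  field_simp
  ring

lemma slice2_diff (d : ℂ) (hd : d ≠ 0) {ψ : ℂ × ℂ → ℂ}
    (hψ : ∀ z : ℂ × ℂ, z ≠ 0 → DifferentiableAt ℝ ψ z)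
    (hdb : ∀ z : ℂ × ℂ, z ≠ 0 → dbar1 ψ z = xi1 z) :
    Differentiable ℂ (fun u => ψ (u, d) - phi2 u d) := by
  intro u
  have hzne : ((u, d) : ℂ × ℂ) ≠ 0 := fun h => hd (congrArg Prod.snd h)
  have hρ0 : (u * (starRingEnd ℂ) u + d * (starRingEnd ℂ) d) ≠ 0 := rho_ne (u, d) hzne
  have hden : d * (u * (starRingEnd ℂ) u + d * (starRingEnd ℂ) d) ≠ 0 := mul_ne_zero hd hρ0
  have hD := (hψ _ hzne).hasFDerivAt
  have pair : HasFDerivAt (fun u : ℂ => ((u, d) : ℂ × ℂ))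
      ((ContinuousLinearMap.id ℝ ℂ).prod (0 : ℂ →L[ℝ] ℂ)) u :=
    HasFDerivAt.prodMk (hasFDerivAt_id u) (hasFDerivAt_const d u)
  have hs := hD.comp u pair
  simp only [Function.comp_def] at hs
  have hconj : HasFDerivAt (fun v : ℂ => (starRingEnd ℂ) v) (conjCLE : ℂ →L[ℝ] ℂ) u :=
    conjCLE.hasFDerivAt
  have hρw := (((hasFDerivAt_id u).mul hconj).add
    (hasFDerivAt_const (d * (starRingEnd ℂ) d) u))
  have hdenD := hρw.const_mul d
  have hinv := (hasFDerivAt_inv' (𝕜 := ℝ) hden).comp u hdenD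
  have hφ := hconj.mul hinv
  simp only [Function.comp_def] at hφ
  have hg := hs.sub hφ
  simp only [phi2]
  refine CR_diff hg ?_
  have h2 := hdb (u, d) hzne
  rw [dbar1] at h2
  have hxi : xi1 (u, d) = (starRingEnd ℂ) d / (u * (starRingEnd ℂ) u + d * (starRingEnd ℂ) d) ^ 2 := by
    rw [xi1, Complex.mul_conj, Complex.mul_conj, sq, sq]
    norm_cast
  rw [hxi] at h2
  set D1 := fderiv ℝ ψ (u, d) (1, 0) with hD1
  set DI := fderiv ℝ ψ (u, d) (Complex.I, 0) with hDId
  simp only [ContinuousLinearMap.sub_apply, ContinuousLinearMap.comp_apply,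
    ContinuousLinearMap.prod_apply, ContinuousLinearMap.zero_apply,
    ContinuousLinearMap.coe_id', id_eq, ContinuousLinearMap.add_apply,
    ContinuousLinearMap.smul_apply, ContinuousLinearMap.neg_apply,
    ContinuousLinearMap.mulLeftRight_apply, conjCLE_apply, smul_eq_mul, map_one, Complex.conj_I,
    Pi.mul_apply, Pi.add_apply, Pi.neg_apply, ContinuousLinearEquiv.coe_coe, id_eq,
    ← hD1, ← hDId]
  have h2' : Complex.I * DI = 2 * ((starRingEnd ℂ) d /
      (u * (starRingEnd ℂ) u + d * (starRingEnd ℂ) d) ^ 2) - D1 := by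
    linear_combination 2 * h2
  have hDI : DI = -Complex.I * (2 * ((starRingEnd ℂ) d /
      (u * (starRingEnd ℂ) u + d * (starRingEnd ℂ) d) ^ 2) - D1) := by
    rw [← h2', ← mul_assoc]
    norm_num [Complex.I_mul_I]
  rw [hDI]
  field_simp
  ring

-- Facts about points on the unit sphere
lemma sphere_mul_conj {w : ℂ} (hw : w ∈ Metric.sphere (0:ℂ) 1) :
    w * (starRingEnd ℂ) w = 1 := by
  rw [Complex.mul_conj]
  have : ‖w‖ = 1 := by simpa using hw
  rw [← Complex.sq_norm, this]
  norm_num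

lemma sphere_conj_eq_inv {w : ℂ} (hw : w ∈ Metric.sphere (0:ℂ) 1) :
    (starRingEnd ℂ) w = w⁻¹ :=
  eq_inv_of_mul_eq_one_left (by rw [mul_comm]; exact sphere_mul_conj hw)

lemma sphere_ne_zero {w : ℂ} (hw : w ∈ Metric.sphere (0:ℂ) 1) : w ≠ 0 := by
  have : ‖w‖ = 1 := by simpa using hw
  intro h; rw [h] at this; simp at this

lemma circleIntegral_inv : (∮ z in C((0:ℂ), 1), z⁻¹) = 2 * (Real.pi : ℂ) * Complex.I := by
  have := circleIntegral.integral_sub_inv_of_mem_ball (c := (0:ℂ)) (w := 0) (R := 1)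
    (Metric.mem_ball_self one_pos)
  simpa using this

lemma phi1_cont (c : ℂ) (hc : c ≠ 0) : Continuous (fun w => phi1 c w) := by
  have : ∀ w : ℂ, c * (c * (starRingEnd ℂ) c + w * (starRingEnd ℂ) w) ≠ 0 := fun w =>
    mul_ne_zero hc (rho_ne (c, w) (fun h => hc (congrArg Prod.fst h)))
  exact (Complex.continuous_conj.neg).mul
    ((continuous_const.mul (continuous_const.add
      (continuous_id.mul Complex.continuous_conj))).inv₀ this)

lemma phi2_cont (d : ℂ) (hd : d ≠ 0) : Continuous (fun u => phi2 u d) := by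
  have : ∀ u : ℂ, d * (u * (starRingEnd ℂ) u + d * (starRingEnd ℂ) d) ≠ 0 := fun u =>
    mul_ne_zero hd (rho_ne (u, d) (fun h => hd (congrArg Prod.snd h)))
  exact Complex.continuous_conj.mul
    ((continuous_const.mul ((continuous_id.mul Complex.continuous_conj).add
      continuous_const)).inv₀ this)

lemma innerA {ψ : ℂ × ℂ → ℂ}
    (hψ : ∀ z : ℂ × ℂ, z ≠ 0 → DifferentiableAt ℝ ψ z)
    (hdb : ∀ z : ℂ × ℂ, z ≠ 0 → dbar2 ψ z = xi2 z)
    {c : ℂ} (hc : c ∈ Metric.sphere (0:ℂ) 1) :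
    (∮ w in C((0:ℂ), 1), ψ (c, w)) = -(Real.pi : ℂ) * Complex.I / c := by
  have hc0 : c ≠ 0 := sphere_ne_zero hc
  have hdiff := slice1_diff c hc0 hψ hdb
  have hgcont : Continuous (fun w => ψ (c, w) - phi1 c w) := hdiff.continuous
  have hψcont : Continuous (fun w => ψ (c, w)) := by
    have := hgcont.add (phi1_cont c hc0)
    simpa [Pi.add_def] using this
  have h0 : (∮ w in C((0:ℂ), 1), (ψ (c, w) - phi1 c w)) = 0 :=
    Complex.circleIntegral_eq_zero_of_differentiable_on_off_countable zero_le_one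
      Set.countable_empty hgcont.continuousOn (fun z _ => hdiff z)
  have hsub : (∮ w in C((0:ℂ), 1), (ψ (c, w) - phi1 c w))
      = (∮ w in C((0:ℂ), 1), ψ (c, w)) - (∮ w in C((0:ℂ), 1), phi1 c w) :=
    circleIntegral.integral_sub (hψcont.continuousOn.circleIntegrable zero_le_one)
      ((phi1_cont c hc0).continuousOn.circleIntegrable zero_le_one)
  have hval : (∮ w in C((0:ℂ), 1), phi1 c w) = -(Real.pi : ℂ) * Complex.I / c := by
    have heq : Set.EqOn (fun w => phi1 c w) (fun w => (-(2*c)⁻¹) * w⁻¹)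
        (Metric.sphere (0:ℂ) 1) := by
      intro w hw
      have hw0 : w ≠ 0 := sphere_ne_zero hw
      simp only [phi1]
      rw [sphere_mul_conj hw, sphere_mul_conj hc, sphere_conj_eq_inv hw]
      field_simp
      ring
    rw [circleIntegral.integral_congr zero_le_one heq,
      circleIntegral.integral_const_mul, circleIntegral_inv]
    field_simp
  rw [hsub, hval] at h0
  linear_combination h0

lemma innerB {ψ : ℂ × ℂ → ℂ}
    (hψ : ∀ z : ℂ × ℂ, z ≠ 0 → DifferentiableAt ℝ ψ z)
    (hdb : ∀ z : ℂ × ℂ, z ≠ 0 → dbar1 ψ z = xi1 z)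
    {d : ℂ} (hd : d ∈ Metric.sphere (0:ℂ) 1) :
    (∮ u in C((0:ℂ), 1), ψ (u, d)) = (Real.pi : ℂ) * Complex.I / d := by
  have hd0 : d ≠ 0 := sphere_ne_zero hd
  have hdiff := slice2_diff d hd0 hψ hdb
  have hgcont : Continuous (fun u => ψ (u, d) - phi2 u d) := hdiff.continuous
  have hψcont : Continuous (fun u => ψ (u, d)) := by
    have := hgcont.add (phi2_cont d hd0)
    simpa [Pi.add_def] using this
  have h0 : (∮ u in C((0:ℂ), 1), (ψ (u, d) - phi2 u d)) = 0 :=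
    Complex.circleIntegral_eq_zero_of_differentiable_on_off_countable zero_le_one
      Set.countable_empty hgcont.continuousOn (fun z _ => hdiff z)
  have hsub : (∮ u in C((0:ℂ), 1), (ψ (u, d) - phi2 u d))
      = (∮ u in C((0:ℂ), 1), ψ (u, d)) - (∮ u in C((0:ℂ), 1), phi2 u d) :=
    circleIntegral.integral_sub (hψcont.continuousOn.circleIntegrable zero_le_one)
      ((phi2_cont d hd0).continuousOn.circleIntegrable zero_le_one)
  have hval : (∮ u in C((0:ℂ), 1), phi2 u d) = (Real.pi : ℂ) * Complex.I / d := by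
    have heq : Set.EqOn (fun u => phi2 u d) (fun u => ((2*d)⁻¹) * u⁻¹)
        (Metric.sphere (0:ℂ) 1) := by
      intro u hu
      have hu0 : u ≠ 0 := sphere_ne_zero hu
      simp only [phi2]
      rw [sphere_mul_conj hu, sphere_mul_conj hd, sphere_conj_eq_inv hu]
      field_simp
      ring
    rw [circleIntegral.integral_congr zero_le_one heq,
      circleIntegral.integral_const_mul, circleIntegral_inv]
    field_simp
  rw [hsub, hval] at h0
  linear_combination h0

open MeasureTheory in
lemma final_contradiction {ψ : ℂ × ℂ → ℂ}
    (hψc : ∀ z : ℂ × ℂ, z ≠ 0 → ContinuousAt ψ z)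
    (hψ : ∀ z : ℂ × ℂ, z ≠ 0 → DifferentiableAt ℝ ψ z)
    (hdb1 : ∀ z : ℂ × ℂ, z ≠ 0 → dbar1 ψ z = xi1 z)
    (hdb2 : ∀ z : ℂ × ℂ, z ≠ 0 → dbar2 ψ z = xi2 z) : False := by
  set n : ℕ := 1 with hn
  set f : (Fin 2 → ℂ) → ℂ := fun x => ψ (x 0, x 1) with hfdef
  have hcm : ∀ (θ : Fin 2 → ℝ) (i : Fin 2),
      torusMap (0 : Fin 2 → ℂ) (fun _ => 1) θ i = circleMap 0 1 (θ i) := by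
    intro θ i; simp [torusMap, circleMap]
  have hne : ∀ θ : Fin 2 → ℝ,
      ((torusMap (0 : Fin 2 → ℂ) (fun _ => 1) θ 0, torusMap (0 : Fin 2 → ℂ) (fun _ => 1) θ 1)
        : ℂ × ℂ) ≠ 0 := by
    intro θ h
    have h1 := congrArg Prod.fst h
    simp only [hcm] at h1
    exact circleMap_ne_center one_ne_zero h1
  have hcont : Continuous fun θ : Fin 2 → ℝ =>
      f (torusMap (0 : Fin 2 → ℂ) (fun _ => 1) θ) := by
    rw [continuous_iff_continuousAt]
    intro θ
    have hpair : Continuous fun θ : Fin 2 → ℝ =>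
        ((torusMap (0 : Fin 2 → ℂ) (fun _ => 1) θ 0,
          torusMap (0 : Fin 2 → ℂ) (fun _ => 1) θ 1) : ℂ × ℂ) := by
      have hi : ∀ i : Fin 2, Continuous fun θ : Fin 2 → ℝ =>
          torusMap (0 : Fin 2 → ℂ) (fun _ => 1) θ i := by
        intro i
        simp only [hcm]
        exact (continuous_circleMap 0 1).comp (continuous_apply i)
      exact (hi 0).prodMk (hi 1)
    show ContinuousAt (ψ ∘ fun θ : Fin 2 → ℝ =>
        ((torusMap (0 : Fin 2 → ℂ) (fun _ => 1) θ 0,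
          torusMap (0 : Fin 2 → ℂ) (fun _ => 1) θ 1) : ℂ × ℂ)) θ
    exact ContinuousAt.comp (hψc _ (hne θ)) hpair.continuousAt
  have hTI : TorusIntegrable f (0 : Fin 2 → ℂ) (fun _ => 1) :=
    hcont.continuousOn.integrableOn_compact isCompact_Icc
  -- two iterated-integral representations
  have hF0 := torusIntegral_succAbove hTI 0
  have hF1 := torusIntegral_succAbove hTI 1
  have hins0 : ∀ (x : ℂ) (y : Fin 1 → ℂ),
      f (Fin.insertNth (0 : Fin 2) x y) = ψ (x, y 0) := by
    intro x y
    have e0 : (Fin.insertNth (0 : Fin 2) x y : Fin 2 → ℂ) 0 = x := by simp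
    have e1 : (Fin.insertNth (0 : Fin 2) x y : Fin 2 → ℂ) 1 = y 0 := by
      have h := Fin.insertNth_apply_succAbove (α := fun _ : Fin 2 => ℂ)
        (i := (0 : Fin 2)) (x := x) (p := y) (j := (0 : Fin 1))
      simpa using h
    simp only [hfdef, e0, e1]
  have hins1 : ∀ (x : ℂ) (y : Fin 1 → ℂ),
      f (Fin.insertNth (1 : Fin 2) x y) = ψ (y 0, x) := by
    intro x y
    have e0 : (Fin.insertNth (1 : Fin 2) x y : Fin 2 → ℂ) 1 = x := by simp
    have e1 : (Fin.insertNth (1 : Fin 2) x y : Fin 2 → ℂ) 0 = y 0 := by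
      have h := Fin.insertNth_apply_succAbove (α := fun _ : Fin 2 => ℂ)
        (i := (1 : Fin 2)) (x := x) (p := y) (j := (0 : Fin 1))
      simpa using h
    simp only [hfdef, e0, e1]
  have hL : (∯ x in T((0 : Fin 2 → ℂ), fun _ => 1), f x)
      = ∮ x in C((0:ℂ), 1), ∮ z in C((0:ℂ), 1), ψ (x, z) := by
    rw [hF0]
    refine circleIntegral.integral_congr zero_le_one fun x _ => ?_
    rw [torusIntegral_dim1]
    exact circleIntegral.integral_congr zero_le_one fun z _ => hins0 x (fun _ => z)
  have hR : (∯ x in T((0 : Fin 2 → ℂ), fun _ => 1), f x)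
      = ∮ x in C((0:ℂ), 1), ∮ z in C((0:ℂ), 1), ψ (z, x) := by
    rw [hF1]
    refine circleIntegral.integral_congr zero_le_one fun x _ => ?_
    rw [torusIntegral_dim1]
    exact circleIntegral.integral_congr zero_le_one fun z _ => hins1 x (fun _ => z)
  have hLv : (∮ x in C((0:ℂ), 1), ∮ z in C((0:ℂ), 1), ψ (x, z))
      = (-(Real.pi : ℂ) * Complex.I) * (2 * (Real.pi : ℂ) * Complex.I) := by
    have : Set.EqOn (fun x => ∮ z in C((0:ℂ), 1), ψ (x, z))
        (fun x => (-(Real.pi : ℂ) * Complex.I) * x⁻¹) (Metric.sphere (0:ℂ) 1) := by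
      intro x hx
      dsimp only
      rw [innerA hψ hdb2 hx]
      simp only [div_eq_mul_inv]
    rw [circleIntegral.integral_congr zero_le_one this,
      circleIntegral.integral_const_mul, circleIntegral_inv]
  have hRv : (∮ x in C((0:ℂ), 1), ∮ z in C((0:ℂ), 1), ψ (z, x))
      = ((Real.pi : ℂ) * Complex.I) * (2 * (Real.pi : ℂ) * Complex.I) := by
    have : Set.EqOn (fun x => ∮ z in C((0:ℂ), 1), ψ (z, x))
        (fun x => ((Real.pi : ℂ) * Complex.I) * x⁻¹) (Metric.sphere (0:ℂ) 1) := by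
      intro x hx
      dsimp only
      rw [innerB hψ hdb1 hx]
      simp only [div_eq_mul_inv]
    rw [circleIntegral.integral_congr zero_le_one this,
      circleIntegral.integral_const_mul, circleIntegral_inv]
  have heq : (-(Real.pi : ℂ) * Complex.I) * (2 * (Real.pi : ℂ) * Complex.I)
      = ((Real.pi : ℂ) * Complex.I) * (2 * (Real.pi : ℂ) * Complex.I) := by
    rw [← hLv, ← hRv, ← hL, ← hR]
  have hπ : (Real.pi : ℂ) ≠ 0 := Complex.ofReal_ne_zero.2 Real.pi_ne_zero
  have hsq : ((Real.pi : ℂ)) ^ 2 = 0 := by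
    have hI := Complex.I_sq
    linear_combination (1/4) * heq + ((Real.pi:ℂ)^2) * hI
  exact pow_ne_zero 2 hπ hsq

theorem stmt_10 :
    (∀ z : ℂ × ℂ, z ≠ 0 → dbar1 xi2 z = dbar2 xi1 z) ∧
    (∀ z : ℂ × ℂ, z ≠ 0 → dz1 xi1 z + dz2 xi2 z = 0) ∧
    ¬ ∃ ψ : ℂ × ℂ → ℂ, ContDiffOn ℝ (⊤ : ℕ∞) ψ {z : ℂ × ℂ | z ≠ 0} ∧
        Tendsto ψ (cocompact (ℂ × ℂ)) (nhds 0) ∧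
        ∀ z : ℂ × ℂ, z ≠ 0 → dbar1 ψ z = xi1 z ∧ dbar2 ψ z = xi2 z := by
  refine ⟨part1, part2, ?_⟩
  rintro ⟨ψ, hsm, -, hdb⟩
  have hψd : ∀ z : ℂ × ℂ, z ≠ 0 → DifferentiableAt ℝ ψ z := fun z hz =>
    (hsm.differentiableOn (by simp)).differentiableAt (isOpen_ne.mem_nhds hz)
  have hψc : ∀ z : ℂ × ℂ, z ≠ 0 → ContinuousAt ψ z := fun z hz =>
    hsm.continuousOn.continuousAt (isOpen_ne.mem_nhds hz)
  exact final_contradiction hψc hψd (fun z hz => (hdb z hz).1) (fun z hz => (hdb z hz).2)
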